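/- Let A be a finite-dimensional algebra over a field, let n ≥ 1, and let 0 → X → Y → Z → 0 be a short exact sequence of finitely generated left A-modules. If both X and Z have dominant dimension at least n, then Y has dominant dimension at least n. (That is, the class Dom_n of modules of dominant dimension at least n is closed under extensions.) -/

import Mathlib

/-!
Horseshoe argument. Embed `X ↪ I` and `Z ↪ J` into projective-injective modules and extend
`X ↪ I` along `X ↪ Y` by injectivity of `I`; together with `Y → Z ↪ J` this embeds `Y` into the
projective-injective module `I × J`. By a diagram chase the cokernels of the three
embeddings again form a short exact sequence, and induction on `n` applies to it.
-/

open CategoryTheory Opposite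

noncomputable section

/-- `domdimGE B n M` says that the dominant dimension of the `B`-module `M` is at least `n`:
there is an exact sequence `0 → M → I_0 → ⋯ → I_{n-1}` in which every `I_j` is both
projective and injective. -/
def domdimGE (B : Type) [Ring B] : ℕ → ModuleCat B → Prop
  | 0, _ => True
  | n + 1, M => ∃ (I : ModuleCat B) (f : M →ₗ[B] I), Projective I ∧ Injective I ∧
      Function.Injective f ∧ domdimGE B n (ModuleCat.of B (I ⧸ LinearMap.range f))

open Function LinearMap

namespace LinearMap

variable {A M N P Q : Type*} [Ring A] [AddCommGroup M] [Module A M] [AddCommGroup N] [Module A N]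
  [AddCommGroup P] [Module A P] [AddCommGroup Q] [Module A Q]

theorem range_le_comap_range_of_comp_eq {ι : M →ₗ[A] N} {u : N →ₗ[A] P} {f : M →ₗ[A] Q}
    {e : Q →ₗ[A] P} (h : e ∘ₗ f = u ∘ₗ ι) : range ι ≤ (range e).comap u := by
  rintro _ ⟨x, rfl⟩
  exact ⟨f x, LinearMap.congr_fun h x⟩

end LinearMap

section CokernelSequence

/-! `(ι, e, κ)` is a map from the sequence `X →f Y →g Z` to the sequence `I →u P →v J`. -/

variable {A X Y Z I P J : Type*} [Ring A]
  [AddCommGroup X] [Module A X] [AddCommGroup Y] [Module A Y] [AddCommGroup Z] [Module A Z]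
  [AddCommGroup I] [Module A I] [AddCommGroup P] [Module A P] [AddCommGroup J] [Module A J]
  {f : X →ₗ[A] Y} {g : Y →ₗ[A] Z} {u : I →ₗ[A] P} {v : P →ₗ[A] J}
  {ι : X →ₗ[A] I} {e : Y →ₗ[A] P} {κ : Z →ₗ[A] J}

theorem injective_of_comp_eq_of_exact (hfg : Exact f g) (hu : Injective u) (hι : Injective ι)
    (hκ : Injective κ) (h₁ : e ∘ₗ f = u ∘ₗ ι) (h₂ : v ∘ₗ e = κ ∘ₗ g) : Injective e := by
  rw [injective_iff_map_eq_zero]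
  intro y hy
  have hgy : κ (g y) = κ 0 := by
    rw [map_zero, ← LinearMap.comp_apply, ← h₂, LinearMap.comp_apply, hy, map_zero]
  obtain ⟨x, rfl⟩ := (hfg y).mp (hκ hgy)
  have hx : u (ι x) = u (ι 0) := by
    rw [map_zero, map_zero, ← LinearMap.comp_apply, ← h₁, LinearMap.comp_apply, hy]
  rw [hι (hu hx), map_zero]

theorem injective_mapQ_of_comp_eq (hfg : Exact f g) (huv : Exact u v) (hu : Injective u)
    (hκ : Injective κ) (h₁ : e ∘ₗ f = u ∘ₗ ι) (h₂ : v ∘ₗ e = κ ∘ₗ g) :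
    Injective ((range ι).mapQ (range e) u (range_le_comap_range_of_comp_eq h₁)) := by
  rw [injective_iff_map_eq_zero]
  intro a ha
  obtain ⟨i, rfl⟩ := Submodule.Quotient.mk_surjective _ a
  obtain ⟨y, hy⟩ : u i ∈ range e := (Submodule.Quotient.mk_eq_zero _).mp ha
  have hgy : κ (g y) = κ 0 := by
    rw [map_zero, ← LinearMap.comp_apply, ← h₂, LinearMap.comp_apply, hy,
      huv.apply_apply_eq_zero]
  obtain ⟨x, rfl⟩ := (hfg y).mp (hκ hgy)
  have hx : u (ι x) = u i := by rw [← LinearMap.comp_apply, ← h₁, LinearMap.comp_apply, hy]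
  exact (Submodule.Quotient.mk_eq_zero _).mpr ⟨x, hu hx⟩

theorem surjective_mapQ_of_comp_eq (hv : Surjective v) (h₂ : v ∘ₗ e = κ ∘ₗ g) :
    Surjective ((range e).mapQ (range κ) v (range_le_comap_range_of_comp_eq h₂.symm)) := by
  intro c
  obtain ⟨j, rfl⟩ := Submodule.Quotient.mk_surjective _ c
  obtain ⟨p, rfl⟩ := hv j
  exact ⟨Submodule.Quotient.mk p, rfl⟩

theorem exact_mapQ_of_comp_eq (hg : Surjective g) (huv : Exact u v) (h₁ : e ∘ₗ f = u ∘ₗ ι)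
    (h₂ : v ∘ₗ e = κ ∘ₗ g) :
    Exact ((range ι).mapQ (range e) u (range_le_comap_range_of_comp_eq h₁))
      ((range e).mapQ (range κ) v (range_le_comap_range_of_comp_eq h₂.symm)) := by
  intro q
  constructor
  · intro hq
    obtain ⟨p, rfl⟩ := Submodule.Quotient.mk_surjective _ q
    obtain ⟨z, hz⟩ : v p ∈ range κ := (Submodule.Quotient.mk_eq_zero _).mp hq
    obtain ⟨y, rfl⟩ := hg z
    obtain ⟨i, hi⟩ : p - e y ∈ range u := (huv (p - e y)).mp <| by
      rw [map_sub, ← hz, ← LinearMap.comp_apply, ← h₂, LinearMap.comp_apply, sub_self]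
    refine ⟨Submodule.Quotient.mk i, (Submodule.Quotient.eq _).mpr ⟨-y, ?_⟩⟩
    rw [map_neg, hi]
    abel
  · rintro ⟨a, rfl⟩
    obtain ⟨i, rfl⟩ := Submodule.Quotient.mk_surjective _ a
    simp only [Submodule.mapQ_apply, Submodule.Quotient.mk_eq_zero, huv.apply_apply_eq_zero,
      zero_mem]

end CokernelSequence

universe u v

section

variable {A : Type u} [Ring A]

theorem ModuleCat.injective_of_prod {I J : ModuleCat.{v} A} [Injective I] [Injective J] :
    Injective (ModuleCat.of A (I × J)) :=
  Injective.of_iso (ModuleCat.biprodIsoProd I J) inferInstance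

theorem ModuleCat.exists_comp_eq_of_injective {X Y : Type*} [AddCommGroup X] [Module A X]
    [AddCommGroup Y] [Module A Y] [Small.{v} A] (I : ModuleCat.{v} A) [Injective I]
    {f : X →ₗ[A] Y} (hf : Injective f) (ι : X →ₗ[A] I) : ∃ h : Y →ₗ[A] I, h ∘ₗ f = ι :=
  have := Module.injective_module_of_injective_object A I
  Module.Injective.extension_property A I X Y f hf ι

end

theorem domdimGE_of_exact {A : Type} [Ring A] (n : ℕ) {X Y Z : Type}
    [AddCommGroup X] [Module A X] [AddCommGroup Y] [Module A Y] [AddCommGroup Z] [Module A Z]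
    {f : X →ₗ[A] Y} {g : Y →ₗ[A] Z}
    (hf : Injective f) (hg : Surjective g) (hfg : Exact f g)
    (hX : domdimGE A n (ModuleCat.of A X)) (hZ : domdimGE A n (ModuleCat.of A Z)) :
    domdimGE A n (ModuleCat.of A Y) := by
  induction n generalizing X Y Z with
  | zero => trivial
  | succ n ih =>
    obtain ⟨I, ι, hIp, hIi, hι, hXI⟩ := hX
    obtain ⟨J, κ, hJp, hJi, hκ, hZJ⟩ := hZ
    obtain ⟨h, hh⟩ := ModuleCat.exists_comp_eq_of_injective I hf ι
    let e : Y →ₗ[A] I × J := h.prod (κ ∘ₗ g)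
    have h₁ : e ∘ₗ f = inl A I J ∘ₗ ι := by
      refine LinearMap.ext fun x => Prod.ext (LinearMap.congr_fun hh x) ?_
      show κ (g (f x)) = 0
      rw [hfg.apply_apply_eq_zero, map_zero]
    have h₂ : snd A I J ∘ₗ e = κ ∘ₗ g := rfl
    refine ⟨ModuleCat.of A (I × J), e, inferInstance, ModuleCat.injective_of_prod,
      injective_of_comp_eq_of_exact hfg inl_injective hι hκ h₁ h₂, ?_⟩
    exact ih (injective_mapQ_of_comp_eq hfg Exact.inl_snd inl_injective hκ h₁ h₂)
      (surjective_mapQ_of_comp_eq snd_surjective h₂)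
      (exact_mapQ_of_comp_eq hg Exact.inl_snd h₁ h₂) hXI hZJ

theorem stmt2_general (A : Type) [Ring A]
    (n : ℕ)
    (X Y Z : Type) [AddCommGroup X] [Module A X]
    [AddCommGroup Y] [Module A Y]
    [AddCommGroup Z] [Module A Z]
    (f : X →ₗ[A] Y) (g : Y →ₗ[A] Z)
    (hf : Function.Injective f) (hg : Function.Surjective g)
    (hfg : LinearMap.range f = LinearMap.ker g)
    (hX : domdimGE A n (ModuleCat.of A X)) (hZ : domdimGE A n (ModuleCat.of A Z)) :
    domdimGE A n (ModuleCat.of A Y) :=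
  domdimGE_of_exact n hf hg (LinearMap.exact_iff.mpr hfg.symm) hX hZ

/-- the class of modules of dominant dimension at least `n` is closed under
extensions: in a short exact sequence `0 → X → Y → Z → 0`, if `X` and `Z` have dominant
dimension at least `n` then so does `Y`. -/
theorem stmt2 (k A : Type) [Field k] [Ring A] [Algebra k A] [FiniteDimensional k A]
    (n : ℕ) (hn : 1 ≤ n)
    (X Y Z : Type) [AddCommGroup X] [Module A X] [Module.Finite A X]
    [AddCommGroup Y] [Module A Y] [Module.Finite A Y]
    [AddCommGroup Z] [Module A Z] [Module.Finite A Z]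
    (f : X →ₗ[A] Y) (g : Y →ₗ[A] Z)
    (hf : Function.Injective f) (hg : Function.Surjective g)
    (hfg : LinearMap.range f = LinearMap.ker g)
    (hX : domdimGE A n (ModuleCat.of A X)) (hZ : domdimGE A n (ModuleCat.of A Z)) :
    domdimGE A n (ModuleCat.of A Y) :=
  stmt2_general A n X Y Z f g hf hg hfg hX hZ
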